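/- Let A and B be O-superalgebras with A supersymmetric. If M is an (A,B)-bisupermodule such that the functor |M| ⊗_{|B|} – induces a Morita equivalence between the ungraded algebras |B| and |A|, then M together with its dual M* induce a Morita superequivalence between B and A; that is, M ⊗_B M* ≅ A as (A,A)-bisupermodules and M* ⊗_A M ≅ B as (B,B)-bisupermodules. -/

import Mathlib

/-- A superalgebra structure on an `O`-algebra `A`: since `2` is invertible in all our base
rings, a `ℤ/2`-grading is the same datum as an `O`-algebra involution `σ` (even part the fixed
points, odd part the anti-fixed points). -/
structure SuperAlg (O : Type) [CommRing O] (A : Type) [Ring A] [Algebra O A] where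
  σ : A ≃ₐ[O] A
  invol : ∀ a, σ (σ a) = a

namespace SuperAlg

variable {O : Type} [CommRing O] {A : Type} [Ring A] [Algebra O A]

/-- An element is even if it is fixed by the sign automorphism. -/
def IsEven (sA : SuperAlg O A) (a : A) : Prop := sA.σ a = a

/-- An element is odd if it is negated by the sign automorphism. -/
def IsOdd (sA : SuperAlg O A) (a : A) : Prop := sA.σ a = -a

/-- The even part `A₀` of a superalgebra, as a subalgebra. -/
def evenPart (sA : SuperAlg O A) : Subalgebra O A where
  carrier := {a | sA.σ a = a}
  add_mem' := by intro a b ha hb; simp only [Set.mem_setOf_eq] at *; rw [map_add, ha, hb]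
  mul_mem' := by intro a b ha hb; simp only [Set.mem_setOf_eq] at *; rw [map_mul, ha, hb]
  algebraMap_mem' := by intro r; simp

/-- A superunit: an invertible odd element. -/
def IsSuperUnit (sA : SuperAlg O A) (u : A) : Prop := IsUnit u ∧ sA.σ u = -u

end SuperAlg

/-- A supermodule structure on a module `M` over a superalgebra `(A, σ)`: an `O`-linear
involution compatible with the sign automorphism of `A`. -/
structure SuperMod {O : Type} [CommRing O] {A : Type} [Ring A] [Algebra O A]
    (sA : SuperAlg O A) (M : Type) [AddCommGroup M] [Module O M] [Module A M]
    [IsScalarTower O A M] where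
  σ : M ≃ₗ[O] M
  invol : ∀ m, σ (σ m) = m
  compat : ∀ (a : A) (m : M), σ (a • m) = sA.σ a • σ m

namespace SuperMod

variable {O : Type} [CommRing O] {A : Type} [Ring A] [Algebra O A] {sA : SuperAlg O A}
variable {M : Type} [AddCommGroup M] [Module O M] [Module A M] [IsScalarTower O A M]

/-- The even part `M₀` of a supermodule, as a module over the even part `A₀`. -/
def evenSub (sM : SuperMod sA M) : Submodule ↥sA.evenPart M where
  carrier := {m | sM.σ m = m}
  add_mem' := by intro a b ha hb; simp only [Set.mem_setOf_eq] at *; rw [map_add, ha, hb]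
  zero_mem' := by simp
  smul_mem' := by
    intro c m hm
    simp only [Set.mem_setOf_eq] at *
    have : (c : A) • m = c • m := rfl
    rw [← this, sM.compat, c.2, hm]

end SuperMod

/-- A module is indecomposable: nonzero, and not the direct sum of two nonzero submodules. -/
def ModIndecomposable (R : Type) [Ring R] (M : Type) [AddCommGroup M] [Module R M] : Prop :=
  (∃ m : M, m ≠ 0) ∧
  ∀ p q : Submodule R M, IsCompl p q → p = ⊥ ∨ q = ⊥

/-- Scalar multiplication by a ring element, as an `O`-linear endomorphism. -/
def smulLin (O : Type) [CommRing O] (A : Type) [Ring A] [Algebra O A]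
    (M : Type) [AddCommGroup M] [Module O M] [Module A M] [IsScalarTower O A M]
    (a : A) : M →ₗ[O] M where
  toFun m := a • m
  map_add' := smul_add a
  map_smul' o m := smul_comm a o m

section SupersymForm

variable (O : Type) [CommRing O] (A : Type) [Ring A] [Algebra O A]

/-- The linear map `A → A*` induced by a trace form, `a ↦ (b ↦ tr (a b))`. -/
def traceToDual (tr : A →ₗ[O] O) : A →ₗ[O] Module.Dual O A where
  toFun a := tr ∘ₗ LinearMap.mulLeft O a
  map_add' a a' := by
    apply LinearMap.ext
    intro b
    simp [add_mul]
  map_smul' c a := by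
    apply LinearMap.ext
    intro b
    simp [smul_mul_assoc]

/-- A supersymmetrizing form on a superalgebra: a symmetric, nondegenerate (perfect) trace
form vanishing on the odd part. -/
def IsSupersymmetrizing (sA : SuperAlg O A) (tr : A →ₗ[O] O) : Prop :=
  (∀ a b : A, tr (a * b) = tr (b * a)) ∧
  Function.Bijective (traceToDual O A tr) ∧
  (∀ a : A, sA.IsOdd a → tr a = 0)

end SupersymForm

section Bimod

open TensorProduct MulOpposite

/-- The action of `b ∈ B` on `M` through `Bᵐᵒᵖ`, as an `A`-linear endomorphism. -/
def rightAct (A : Type) [Ring A] (B : Type) [Ring B]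
    (M : Type) [AddCommGroup M] [Module A M] [Module Bᵐᵒᵖ M] [SMulCommClass A Bᵐᵒᵖ M]
    (b : Bᵐᵒᵖ) : M →ₗ[A] M where
  toFun m := b • m
  map_add' := smul_add b
  map_smul' a m := (smul_comm a b m).symm

/-- The balancing relations defining `M ⊗_B M*` inside `M ⊗_O M*`, with the dual `M*`
realized by an abstract module `D` via `ev : D ≅ Hom_O(M, O)`; the left `B`-action on `M*` is
`(b·f)(m) = f(m b)`. -/
noncomputable def relB (O : Type) [CommRing O] (B : Type) [Ring B] [Algebra O B]
    (M : Type) [AddCommGroup M] [Module O M] [Module Bᵐᵒᵖ M] [IsScalarTower O Bᵐᵒᵖ M]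
    (D : Type) [AddCommGroup D] [Module O D] (ev : D →ₗ[O] Module.Dual O M) :
    Submodule O (M ⊗[O] D) :=
  Submodule.span O {z | ∃ (m : M) (d d' : D) (b : B),
    ev d' = ev d ∘ₗ smulLin O Bᵐᵒᵖ M (op b) ∧
    z = ((op b • m) ⊗ₜ[O] d) - m ⊗ₜ[O] d'}

/-- The balancing relations defining `M* ⊗_A M` inside `M* ⊗_O M`, with the dual realized by
`D`; the right `A`-action on `M*` is `(f·a)(m) = f(a m)`. -/
noncomputable def relA (O : Type) [CommRing O] (A : Type) [Ring A] [Algebra O A]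
    (M : Type) [AddCommGroup M] [Module O M] [Module A M] [IsScalarTower O A M]
    (D : Type) [AddCommGroup D] [Module O D] (ev : D →ₗ[O] Module.Dual O M) :
    Submodule O (D ⊗[O] M) :=
  Submodule.span O {z | ∃ (d d' : D) (m : M) (a : A),
    ev d' = ev d ∘ₗ smulLin O A M a ∧
    z = (d' ⊗ₜ[O] m) - d ⊗ₜ[O] (a • m)}

end Bimod

section Aux
open TensorProduct MulOpposite

variable {O : Type} [CommRing O] {A : Type} [Ring A] [Algebra O A]

noncomputable def tdEquiv (tr : A →ₗ[O] O)
    (hbij : Function.Bijective (traceToDual O A tr)) : A ≃ₗ[O] Module.Dual O A :=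
  LinearEquiv.ofBijective _ hbij

lemma tdEquiv_symm_spec (tr : A →ₗ[O] O) (hbij : Function.Bijective (traceToDual O A tr))
    (f : Module.Dual O A) (a : A) :
    tr ((tdEquiv tr hbij).symm f * a) = f a := by
  have h2 : traceToDual O A tr ((tdEquiv tr hbij).symm f) = f :=
    (tdEquiv tr hbij).apply_symm_apply f
  calc tr (((tdEquiv tr hbij).symm f) * a)
      = (traceToDual O A tr ((tdEquiv tr hbij).symm f)) a := rfl
    _ = f a := by rw [h2]

lemma td_inj (tr : A →ₗ[O] O) (hbij : Function.Bijective (traceToDual O A tr))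
    (a a' : A) (h : ∀ x, tr (a * x) = tr (a' * x)) : a = a' := by
  apply hbij.injective
  exact LinearMap.ext h

variable {M : Type} [AddCommGroup M] [Module O M] [Module A M] [IsScalarTower O A M]
variable {D : Type} [AddCommGroup D] [Module O D]

/-- auxiliary: `a ↦ ev d (a • m)` as a functional on `A`. -/
noncomputable def evAt (ev : D →ₗ[O] Module.Dual O M) (d : D) (m : M) : Module.Dual O A :=
  (ev d) ∘ₗ ((LinearMap.toSpanSingleton A M m).restrictScalars O)

lemma evAt_apply (ev : D →ₗ[O] Module.Dual O M) (d : D) (m : M) (a : A) :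
    evAt ev d m a = ev d (a • m) := rfl

noncomputable def theta0 (tr : A →ₗ[O] O) (hbij : Function.Bijective (traceToDual O A tr))
    (ev : D →ₗ[O] Module.Dual O M) (d : D) (m : M) : A :=
  (tdEquiv tr hbij).symm (evAt ev d m)

lemma tr_theta0_mul (tr : A →ₗ[O] O) (hbij : Function.Bijective (traceToDual O A tr))
    (ev : D →ₗ[O] Module.Dual O M) (d : D) (m : M) (a : A) :
    tr (theta0 tr hbij ev d m * a) = ev d (a • m) :=
  tdEquiv_symm_spec tr hbij _ a

lemma tr_theta0 (tr : A →ₗ[O] O) (hbij : Function.Bijective (traceToDual O A tr))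
    (ev : D →ₗ[O] Module.Dual O M) (d : D) (m : M) :
    tr (theta0 tr hbij ev d m) = ev d m := by
  have := tr_theta0_mul tr hbij ev d m 1
  rwa [mul_one, one_smul] at this


lemma theta0_eq (tr : A →ₗ[O] O) (hbij : Function.Bijective (traceToDual O A tr))
    (ev : D →ₗ[O] Module.Dual O M) (d : D) (m : M) (y : A)
    (h : ∀ x, ev d (x • m) = tr (y * x)) : theta0 tr hbij ev d m = y :=
  td_inj tr hbij _ _ fun x => by rw [tr_theta0_mul]; exact h x

variable (tr : A →ₗ[O] O) (hbij : Function.Bijective (traceToDual O A tr))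
variable (hsym : ∀ a b : A, tr (a * b) = tr (b * a))
variable (ev : D →ₗ[O] Module.Dual O M)

/-- `theta` bundled as an `O`-linear map into `A`-linear maps. -/
noncomputable def theta : D →ₗ[O] (M →ₗ[A] A) where
  toFun d :=
    { toFun := theta0 tr hbij ev d
      map_add' := fun m m' => theta0_eq tr hbij ev d _ _ (fun x => by
        rw [smul_add, map_add, ← tr_theta0_mul tr hbij ev d m x,
          ← tr_theta0_mul tr hbij ev d m' x, add_mul, map_add])
      map_smul' := fun a m => theta0_eq tr hbij ev d _ _ (fun x => by
        simp only [RingHom.id_apply, smul_eq_mul]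
        rw [← mul_smul, ← tr_theta0_mul tr hbij ev d m (x * a), mul_assoc a, hsym a, mul_assoc]) }
  map_add' d d' := LinearMap.ext fun m => theta0_eq tr hbij ev _ _ _ (fun x => by
    show ev (d + d') (x • m) = tr ((theta0 tr hbij ev d m + theta0 tr hbij ev d' m) * x)
    rw [map_add, LinearMap.add_apply, add_mul, map_add, tr_theta0_mul, tr_theta0_mul])
  map_smul' c d := LinearMap.ext fun m => theta0_eq tr hbij ev _ _ _ (fun x => by
    show ev ((RingHom.id O) c • d) (x • m) = tr ((c • theta0 tr hbij ev d m) * x)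
    have h1 : ev ((RingHom.id O) c • d) (x • m) = c • (ev d (x • m)) := by
      rw [ev.map_smul]; rfl
    rw [h1, ← tr_theta0_mul tr hbij ev d m x, ← map_smul tr c, ← smul_mul_assoc])

lemma theta_apply (d : D) (m : M) :
    theta tr hbij hsym ev d m = theta0 tr hbij ev d m := rfl

lemma tr_theta (d : D) (m : M) : tr (theta tr hbij hsym ev d m) = ev d m :=
  tr_theta0 tr hbij ev d m

lemma tr_theta_mul (d : D) (m : M) (a : A) :
    tr (theta tr hbij hsym ev d m * a) = ev d (a • m) :=
  tr_theta0_mul tr hbij ev d m a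

/-- characterization: an `A`-linear map with the right composed trace equals `theta d`. -/
lemma theta_char (d : D) (g : M →ₗ[A] A) (h : ∀ m, tr (g m) = ev d m) :
    g = theta tr hbij hsym ev d := by
  apply LinearMap.ext
  intro m
  refine (theta0_eq tr hbij ev d m (g m) (fun x => ?_)).symm
  rw [← h (x • m), map_smul, smul_eq_mul, hsym]

lemma theta_injective (hev : Function.Injective ev) :
    Function.Injective (theta tr hbij hsym ev) := by
  intro d d' h
  apply hev
  apply LinearMap.ext
  intro m
  rw [← tr_theta tr hbij hsym ev d m, ← tr_theta tr hbij hsym ev d' m, h]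

lemma theta_surjective (hev : Function.Surjective ev) :
    Function.Surjective (theta tr hbij hsym ev) := by
  intro g
  obtain ⟨d, hd⟩ := hev (tr ∘ₗ (g.restrictScalars O))
  exact ⟨d, (theta_char tr hbij hsym ev d g (fun m => by rw [hd]; rfl)).symm⟩

end Aux

section Morita
open TensorProduct MulOpposite

variable {O : Type} [CommRing O] {A : Type} [Ring A] [Algebra O A]
variable {B : Type} [Ring B] [Algebra O B]
variable {M : Type} [AddCommGroup M] [Module O M] [Module A M] [Module Bᵐᵒᵖ M]
  [IsScalarTower O A M] [IsScalarTower O Bᵐᵒᵖ M] [SMulCommClass A Bᵐᵒᵖ M]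
variable {D : Type} [AddCommGroup D] [Module O D]

example (c : O) (a : A) (m : M) : a • c • m = c • a • m := smul_comm a c m

/-- `rightAct` bundled as an `O`-linear map. -/
def rightActL : Bᵐᵒᵖ →ₗ[O] (M →ₗ[A] M) where
  toFun := rightAct A B M
  map_add' b b' := LinearMap.ext fun m => add_smul b b' m
  map_smul' c b := LinearMap.ext fun m => smul_assoc c b m

variable (tr : A →ₗ[O] O) (hbij : Function.Bijective (traceToDual O A tr))
variable (hsym : ∀ a b : A, tr (a * b) = tr (b * a))
variable (ev : D →ₗ[O] Module.Dual O M)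

/-- The `A`-linear endomorphism `x ↦ theta d x • m`. -/
noncomputable def endoDM (d : D) (m : M) : M →ₗ[A] M where
  toFun x := theta tr hbij hsym ev d x • m
  map_add' x y := by rw [map_add, add_smul]
  map_smul' a x := by
    rw [map_smul, smul_eq_mul, mul_smul]
    rfl

variable (hend : Function.Bijective (rightAct A B M))

/-- The right-action `O`-linear equivalence `Bᵐᵒᵖ ≃ End_A(M)`. -/
noncomputable def rAEquiv : Bᵐᵒᵖ ≃ₗ[O] (M →ₗ[A] M) :=
  LinearEquiv.ofBijective (rightActL (O := O) (A := A) (B := B) (M := M)) hend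

/-- The element of `B` acting on the right as `x ↦ theta d x • m`. -/
noncomputable def psi0 (d : D) (m : M) : B :=
  unop ((rAEquiv (O := O) (A := A) (B := B) (M := M) hend).symm (endoDM tr hbij hsym ev d m))

lemma psi0_spec (d : D) (m : M) (x : M) :
    op (psi0 tr hbij hsym ev hend d m) • x = theta tr hbij hsym ev d x • m := by
  have h : rightActL (O := O) (A := A) (B := B) (M := M)
      ((rAEquiv (O := O) (A := A) (B := B) (M := M) hend).symm (endoDM tr hbij hsym ev d m))
      = endoDM tr hbij hsym ev d m :=
    (rAEquiv (O := O) (A := A) (B := B) (M := M) hend).apply_symm_apply _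
  calc op (psi0 tr hbij hsym ev hend d m) • x
      = rightActL (O := O) (A := A) (B := B) (M := M)
          ((rAEquiv (O := O) (A := A) (B := B) (M := M) hend).symm (endoDM tr hbij hsym ev d m)) x := rfl
    _ = endoDM tr hbij hsym ev d m x := by rw [h]
    _ = theta tr hbij hsym ev d x • m := rfl

lemma psi0_char (d : D) (m : M) (b : B)
    (h : ∀ x, op b • x = theta tr hbij hsym ev d x • m) :
    b = psi0 tr hbij hsym ev hend d m := by
  have h2 : rightActL (O := O) (A := A) (B := B) (M := M) (op b)
      = rightActL (O := O) (A := A) (B := B) (M := M) (op (psi0 tr hbij hsym ev hend d m)) := by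
    apply LinearMap.ext
    intro x
    show op b • x = op (psi0 tr hbij hsym ev hend d m) • x
    rw [h x, psi0_spec]
  have h3 := hend.injective h2
  exact op_injective h3

/-- `theta` transforms `B`-twisting of `ev` into precomposition with the right action. -/
lemma theta_smulB (b : B) (d d' : D)
    (hdd' : ev d' = ev d ∘ₗ smulLin O Bᵐᵒᵖ M (op b)) :
    theta tr hbij hsym ev d' = (theta tr hbij hsym ev d).comp (rightAct A B M (op b)) := by
  symm
  apply theta_char
  intro m
  rw [hdd']
  show tr (theta tr hbij hsym ev d (op b • m)) = ev d (op b • m)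
  rw [tr_theta]

/-- `theta` transforms `A`-twisting of `ev` into right multiplication. -/
lemma theta_smulA (a : A) (d d' : D)
    (hdd' : ev d' = ev d ∘ₗ smulLin O A M a) :
    ∀ m, theta tr hbij hsym ev d' m = theta tr hbij hsym ev d m * a := by
  have key : ({ toFun := fun m => theta tr hbij hsym ev d m * a
                map_add' := fun m m' => by rw [map_add, add_mul]
                map_smul' := fun a' m => by
                  rw [map_smul, smul_eq_mul, smul_eq_mul, mul_assoc]
                  rfl } : M →ₗ[A] A)
      = theta tr hbij hsym ev d' := by
    apply theta_char
    intro m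
    show tr (theta tr hbij hsym ev d m * a) = ev d' m
    rw [tr_theta_mul, hdd']
    rfl
  intro m
  rw [← key]
  rfl

/-- The bilinear map `(m, d) ↦ theta d m`. -/
noncomputable def philin : M →ₗ[O] D →ₗ[O] A where
  toFun m :=
    { toFun := fun d => theta tr hbij hsym ev d m
      map_add' := fun d d' => by rw [map_add]; rfl
      map_smul' := fun c d => by rw [map_smul]; rfl }
  map_add' m m' := by
    apply LinearMap.ext; intro d
    show theta tr hbij hsym ev d (m + m') = _
    rw [map_add]; rfl
  map_smul' c m := by
    apply LinearMap.ext; intro d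
    show theta tr hbij hsym ev d (c • m) = c • theta tr hbij hsym ev d m
    exact (theta tr hbij hsym ev d).map_smul_of_tower c m

noncomputable def philift : M ⊗[O] D →ₗ[O] A :=
  TensorProduct.lift (philin tr hbij hsym ev)

lemma philift_tmul (m : M) (d : D) :
    philift tr hbij hsym ev (m ⊗ₜ[O] d) = theta tr hbij hsym ev d m := rfl

lemma relB_le_ker : relB O B M D ev ≤ LinearMap.ker (philift tr hbij hsym ev) := by
  rw [relB, Submodule.span_le]
  rintro z ⟨m, d, d', b, hdd', rfl⟩
  simp only [SetLike.mem_coe, LinearMap.mem_ker, map_sub, philift_tmul]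
  rw [theta_smulB tr hbij hsym ev b d d' hdd']
  show theta tr hbij hsym ev d (op b • m) - theta tr hbij hsym ev d (op b • m) = 0
  rw [sub_self]

/-- `phi : M ⊗_B D → A`. -/
noncomputable def phiQ : ((M ⊗[O] D) ⧸ relB O B M D ev) →ₗ[O] A :=
  Submodule.liftQ _ (philift tr hbij hsym ev) (relB_le_ker tr hbij hsym ev)

lemma phiQ_mk (m : M) (d : D) :
    phiQ (B := B) tr hbij hsym ev (Submodule.Quotient.mk (m ⊗ₜ[O] d))
      = theta tr hbij hsym ev d m := rfl

/-- The bilinear map `(d, m) ↦ psi0 d m`. -/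
noncomputable def psilin : D →ₗ[O] M →ₗ[O] B where
  toFun d :=
    { toFun := fun m => psi0 tr hbij hsym ev hend d m
      map_add' := fun m m' => by
        symm
        apply psi0_char
        intro x
        rw [op_add, add_smul, psi0_spec, psi0_spec, smul_add]
      map_smul' := fun c m => by
        dsimp only [RingHom.id_apply]
        symm
        apply psi0_char
        intro x
        rw [op_smul, smul_assoc, psi0_spec, smul_comm (theta tr hbij hsym ev d x) c m] }
  map_add' d d' := by
    apply LinearMap.ext; intro m
    symm
    apply psi0_char
    intro x
    show (op (psi0 tr hbij hsym ev hend d m) + op (psi0 tr hbij hsym ev hend d' m)) • x = _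
    rw [add_smul, psi0_spec, psi0_spec]
    have h : theta tr hbij hsym ev (d + d') x = theta tr hbij hsym ev d x
        + theta tr hbij hsym ev d' x := by rw [map_add]; rfl
    rw [h, add_smul]
  map_smul' c d := by
    apply LinearMap.ext; intro m
    dsimp only [RingHom.id_apply]
    symm
    apply psi0_char
    intro x
    show (c • op (psi0 tr hbij hsym ev hend d m)) • x = _
    rw [smul_assoc, psi0_spec]
    have h : theta tr hbij hsym ev (c • d) x = c • theta tr hbij hsym ev d x := by
      rw [map_smul]; rfl
    rw [h, smul_assoc]

noncomputable def psilift : D ⊗[O] M →ₗ[O] B :=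
  TensorProduct.lift (psilin tr hbij hsym ev hend)

lemma psilift_tmul (d : D) (m : M) :
    psilift tr hbij hsym ev hend (d ⊗ₜ[O] m) = psi0 tr hbij hsym ev hend d m := rfl

lemma relA_le_ker : relA O A M D ev ≤ LinearMap.ker (psilift tr hbij hsym ev hend) := by
  rw [relA, Submodule.span_le]
  rintro z ⟨d, d', m, a, hdd', rfl⟩
  simp only [SetLike.mem_coe, LinearMap.mem_ker, map_sub, psilift_tmul]
  rw [sub_eq_zero]
  have h1 : psi0 tr hbij hsym ev hend d (a • m) = psi0 tr hbij hsym ev hend d' m := by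
    symm
    apply psi0_char
    intro x
    rw [psi0_spec, theta_smulA tr hbij hsym ev a d d' hdd', mul_smul]
  rw [h1]

/-- `psi : D ⊗_A M → B`. -/
noncomputable def psiQ : ((D ⊗[O] M) ⧸ relA O A M D ev) →ₗ[O] B :=
  Submodule.liftQ _ (psilift tr hbij hsym ev hend) (relA_le_ker tr hbij hsym ev hend)

lemma psiQ_mk (d : D) (m : M) :
    psiQ tr hbij hsym ev hend (Submodule.Quotient.mk (d ⊗ₜ[O] m))
      = psi0 tr hbij hsym ev hend d m := rfl

/-- Right multiplication by `a` after an `A`-linear functional, as an `A`-linear map. -/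
def rmulHom (g : M →ₗ[A] A) (a : A) : M →ₗ[A] A where
  toFun x := g x * a
  map_add' x y := by rw [map_add, add_mul]
  map_smul' a' x := by
    rw [map_smul, smul_eq_mul, smul_eq_mul, mul_assoc]
    rfl

lemma rmulHom_apply (g : M →ₗ[A] A) (a : A) (x : M) : rmulHom g a x = g x * a := rfl

variable (hev : Function.Bijective ev)

/-- `theta` as an `O`-linear equivalence `D ≃ Hom_A(M, A)`. -/
noncomputable def thetaE : D ≃ₗ[O] (M →ₗ[A] A) :=
  LinearEquiv.ofBijective (theta tr hbij hsym ev)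
    ⟨theta_injective tr hbij hsym ev hev.injective,
     theta_surjective tr hbij hsym ev hev.surjective⟩

lemma thetaE_symm_spec (g : M →ₗ[A] A) :
    theta tr hbij hsym ev ((thetaE tr hbij hsym ev hev).symm g) = g :=
  (thetaE tr hbij hsym ev hev).apply_symm_apply g

lemma ev_thetaE_symm (g : M →ₗ[A] A) (x : M) :
    ev ((thetaE tr hbij hsym ev hev).symm g) x = tr (g x) := by
  rw [← tr_theta tr hbij hsym ev ((thetaE tr hbij hsym ev hev).symm g) x,
    thetaE_symm_spec]

lemma relB_mk (b : B) (m : M) (d d' : D)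
    (hdd' : ev d' = ev d ∘ₗ smulLin O Bᵐᵒᵖ M (op b)) :
    (Submodule.Quotient.mk ((op b • m) ⊗ₜ[O] d) :
        (M ⊗[O] D) ⧸ relB O B M D ev)
      = Submodule.Quotient.mk (m ⊗ₜ[O] d') :=
  (Submodule.Quotient.eq _).mpr (Submodule.subset_span ⟨m, d, d', b, hdd', rfl⟩)

lemma relA_mk (a : A) (m : M) (d d' : D)
    (hdd' : ev d' = ev d ∘ₗ smulLin O A M a) :
    (Submodule.Quotient.mk (d' ⊗ₜ[O] m) :
        (D ⊗[O] M) ⧸ relA O A M D ev)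
      = Submodule.Quotient.mk (d ⊗ₜ[O] (a • m)) :=
  (Submodule.Quotient.eq _).mpr (Submodule.subset_span ⟨d, d', m, a, hdd', rfl⟩)

end Morita

section ListHelpers

lemma list_sum_map_add {α β : Type} [AddCommMonoid β] (l : List α) (f g : α → β) :
    (l.map fun x => f x + g x).sum = (l.map f).sum + (l.map g).sum := by
  induction l with
  | nil => simp
  | cons a t ih => simp [ih]; abel

lemma list_sum_apply {R M N : Type} [Semiring R] [AddCommMonoid M] [AddCommMonoid N]
    [Module R M] [Module R N] (l : List (M →ₗ[R] N)) (x : M) :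
    l.sum x = (l.map fun g => g x).sum := by
  induction l with
  | nil => rfl
  | cons a t ih => simp [ih]

lemma list_sum_mul_left {α R : Type} [Ring R] (l : List α) (f : α → R) (a : R) :
    (l.map fun x => a * f x).sum = a * (l.map f).sum := by
  induction l with
  | nil => simp
  | cons b t ih => simp [ih, mul_add]

end ListHelpers
open TensorProduct MulOpposite in
/-- Let `A`, `B` be superalgebras over `O` with `A` supersymmetric, and let
`M` be an `(A,B)`-bisupermodule such that `|M| ⊗_{|B|} –` induces a Morita equivalence
between `|B|` and `|A|` (equivalently: `M` is a finitely generated projective generator over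
`A` and `B` acts as its full `A`-linear endomorphism ring).  Then `M` and its dual
`M* = Hom_O(M, O)` (realized by an arbitrary module `D ≅ M*`) induce a Morita
superequivalence between `B` and `A`: there are even bimodule isomorphisms
`M ⊗_B M* ≅ A` and `M* ⊗_A M ≅ B`. -/
theorem bisupermodule_dual_morita_superequivalence
    (O : Type) [CommRing O] [IsDomain O] [IsDiscreteValuationRing O]
    [IsAdicComplete (IsLocalRing.maximalIdeal O) O]
    (A : Type) [Ring A] [Algebra O A] [Module.Finite O A] (sA : SuperAlg O A)
    (B : Type) [Ring B] [Algebra O B] [Module.Finite O B] (sB : SuperAlg O B)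
    (tr : A →ₗ[O] O) (htr : IsSupersymmetrizing O A sA tr)
    (M : Type) [AddCommGroup M] [Module O M] [Module A M] [Module Bᵐᵒᵖ M]
    [IsScalarTower O A M] [IsScalarTower O Bᵐᵒᵖ M] [SMulCommClass A Bᵐᵒᵖ M]
    [Module.Finite O M]
    -- the bisupermodule structure: an involution compatible with both sign automorphisms
    (σM : M ≃ₗ[O] M) (hinvol : ∀ m, σM (σM m) = m)
    (hcompatL : ∀ (a : A) (m : M), σM (a • m) = sA.σ a • σM m)
    (hcompatR : ∀ (b : B) (m : M), σM (op b • m) = op (sB.σ b) • σM m)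
    -- `|M| ⊗_{|B|} –` induces a Morita equivalence between `|B|` and `|A|`:
    -- `M` is a finitely generated projective generator over `A`, and `B ≅ End_A(M)ᵒᵖ`
    (hproj : Module.Projective A M) (hfg : Module.Finite A M)
    (hgen : (⊤ : Submodule A A) = ⨆ f : M →ₗ[A] A, LinearMap.range f)
    (hend : Function.Bijective (rightAct A B M)) :
    -- for any realization `D` of the dual `M* = Hom_O(M, O)` …
    ∀ (D : Type) [AddCommGroup D] [Module O D] (ev : D →ₗ[O] Module.Dual O M),
      Function.Bijective ev →
      -- … `M ⊗_B M* ≅ A` as `(A,A)`-bisupermodules …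
      (∃ φ : ((M ⊗[O] D) ⧸ relB O B M D ev) →ₗ[O] A,
        Function.Bijective φ ∧
        (∀ (a : A) (m : M) (d : D),
          φ (Submodule.Quotient.mk ((a • m) ⊗ₜ[O] d)) =
            a * φ (Submodule.Quotient.mk (m ⊗ₜ[O] d))) ∧
        (∀ (a : A) (m : M) (d d' : D), ev d' = ev d ∘ₗ smulLin O A M a →
          φ (Submodule.Quotient.mk (m ⊗ₜ[O] d')) =
            φ (Submodule.Quotient.mk (m ⊗ₜ[O] d)) * a) ∧
        (∀ (m : M) (d d' : D), ev d' = ev d ∘ₗ σM.toLinearMap →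
          φ (Submodule.Quotient.mk ((σM m) ⊗ₜ[O] d')) =
            sA.σ (φ (Submodule.Quotient.mk (m ⊗ₜ[O] d))))) ∧
      -- … and `M* ⊗_A M ≅ B` as `(B,B)`-bisupermodules
      (∃ ψ : ((D ⊗[O] M) ⧸ relA O A M D ev) →ₗ[O] B,
        Function.Bijective ψ ∧
        (∀ (b : B) (d d' : D) (m : M),
          ev d' = ev d ∘ₗ smulLin O Bᵐᵒᵖ M (op b) →
          ψ (Submodule.Quotient.mk (d' ⊗ₜ[O] m)) =
            b * ψ (Submodule.Quotient.mk (d ⊗ₜ[O] m))) ∧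
        (∀ (b : B) (d : D) (m : M),
          ψ (Submodule.Quotient.mk (d ⊗ₜ[O] (op b • m))) =
            ψ (Submodule.Quotient.mk (d ⊗ₜ[O] m)) * b) ∧
        (∀ (d d' : D) (m : M), ev d' = ev d ∘ₗ σM.toLinearMap →
          ψ (Submodule.Quotient.mk (d' ⊗ₜ[O] (σM m))) =
            sB.σ (ψ (Submodule.Quotient.mk (d ⊗ₜ[O] m))))) := by

  obtain ⟨hsym, hbij, hodd⟩ := htr
  intro D _ _ ev hev
  -- the trace is invariant under the sign automorphism
  have trσ : ∀ a : A, tr (sA.σ a) = tr a := by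
    intro a
    have h0 : tr (sA.σ a - a) = 0 := hodd _ (by
      show sA.σ (sA.σ a - a) = -(sA.σ a - a)
      rw [map_sub, sA.invol, neg_sub])
    rw [map_sub, sub_eq_zero] at h0
    exact h0
  -- key: theta intertwines the sign automorphisms
  have keyσ : ∀ (d d' : D), ev d' = ev d ∘ₗ σM.toLinearMap →
      ∀ x, theta tr hbij hsym ev d' x = sA.σ (theta tr hbij hsym ev d (σM x)) := by
    intro d d' h x
    have hg : ({ toFun := fun x => sA.σ (theta tr hbij hsym ev d (σM x))
                 map_add' := fun x y => by rw [map_add, map_add, map_add]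
                 map_smul' := fun a x => by
                   rw [hcompatL, map_smul, smul_eq_mul, map_mul, sA.invol, smul_eq_mul]
                   rfl } :
        M →ₗ[A] A) = theta tr hbij hsym ev d' := by
      apply theta_char
      intro m
      show tr (sA.σ (theta tr hbij hsym ev d (σM m))) = ev d' m
      rw [trσ, tr_theta, h]
      rfl
    rw [← hg]
    rfl
  -- generator: finite expression of 1 as sum of images
  have hgen1 : ∃ l : List ((M →ₗ[A] A) × M), (l.map fun p => p.1 p.2).sum = 1 := by
    have h1 : (1 : A) ∈ ⨆ f : M →ₗ[A] A, LinearMap.range f := by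
      rw [← hgen]; exact Submodule.mem_top
    refine Submodule.iSup_induction (ι := M →ₗ[A] A) (fun f => LinearMap.range f)
      (motive := fun a => ∃ l : List ((M →ₗ[A] A) × M), (l.map fun p => p.1 p.2).sum = a)
      h1 ?_ ⟨[], rfl⟩ ?_
    · rintro f a ⟨m, rfl⟩
      exact ⟨[(f, m)], by simp⟩
    · rintro x y ⟨l₁, h₁⟩ ⟨l₂, h₂⟩
      exact ⟨l₁ ++ l₂, by rw [List.map_append, List.sum_append, h₁, h₂]⟩
  obtain ⟨l, hl⟩ := hgen1
  -- dual basis from finiteness and projectivity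
  obtain ⟨n, s, hs⟩ := Module.Finite.exists_fin (R := A) (M := M)
  have hdbE : ∃ h : Fin n → (M →ₗ[A] A), ∀ m : M, ∑ k, (h k) m • s k = m := by
    haveI := hproj
    set π : (Fin n → A) →ₗ[A] M :=
      { toFun := fun c => ∑ k, c k • s k
        map_add' := fun c c' => by
          rw [← Finset.sum_add_distrib]
          refine Finset.sum_congr rfl fun k _ => ?_
          rw [Pi.add_apply, add_smul]
        map_smul' := fun a c => by
          simp only [RingHom.id_apply, Pi.smul_apply, smul_eq_mul, Finset.smul_sum, mul_smul] }
      with hπdef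
    have hπ : Function.Surjective π := by
      intro m
      have hm : m ∈ Submodule.span A (Set.range s) := by rw [hs]; exact Submodule.mem_top
      rw [Submodule.mem_span_range_iff_exists_fun] at hm
      obtain ⟨c, hc⟩ := hm
      exact ⟨c, hc⟩
    obtain ⟨sec, hsec⟩ := Module.projective_lifting_property π LinearMap.id hπ
    refine ⟨fun k => (LinearMap.proj k) ∘ₗ sec, fun m => ?_⟩
    have h2 : π (sec m) = m := by
      rw [← LinearMap.comp_apply, hsec]; rfl
    exact h2
  obtain ⟨hk, hdb⟩ := hdbE
  constructor
  · -- M ⊗_B M* ≅ A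
    refine ⟨phiQ (B := B) tr hbij hsym ev, ?_, ?_, ?_, ?_⟩
    · -- bijectivity of phi
      rw [Function.bijective_iff_has_inverse]
      refine ⟨fun a => (relB O B M D ev).mkQ
          ((l.map fun p => (a • p.2) ⊗ₜ[O] (thetaE tr hbij hsym ev hev).symm p.1).sum), ?_, ?_⟩
      · -- left inverse
        have Fadd : ∀ a a' : A,
            (relB O B M D ev).mkQ
              ((l.map fun p => ((a + a') • p.2) ⊗ₜ[O] (thetaE tr hbij hsym ev hev).symm p.1).sum)
            = (relB O B M D ev).mkQ
                ((l.map fun p => (a • p.2) ⊗ₜ[O] (thetaE tr hbij hsym ev hev).symm p.1).sum)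
              + (relB O B M D ev).mkQ
                ((l.map fun p => (a' • p.2) ⊗ₜ[O] (thetaE tr hbij hsym ev hev).symm p.1).sum) := by
          intro a a'
          rw [← map_add]
          congr 1
          rw [← list_sum_map_add]
          apply congrArg List.sum
          apply List.map_congr_left
          intro p _
          rw [add_smul, TensorProduct.add_tmul]
        have main : ∀ (m : M) (d : D),
            (relB O B M D ev).mkQ
              ((l.map fun p => ((theta tr hbij hsym ev d m) • p.2)
                  ⊗ₜ[O] (thetaE tr hbij hsym ev hev).symm p.1).sum)
            = (relB O B M D ev).mkQ (m ⊗ₜ[O] d) := by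
          intro m d
          have hsum : (l.map fun p => (thetaE tr hbij hsym ev hev).symm
              (p.1.comp (rightAct A B M (op (psi0 tr hbij hsym ev hend d p.2))))).sum = d := by
            apply theta_injective tr hbij hsym ev hev.injective
            rw [map_list_sum (theta tr hbij hsym ev), List.map_map]
            apply LinearMap.ext
            intro x
            rw [list_sum_apply, List.map_map]
            have hpt : ∀ p ∈ l,
                ((fun g : M →ₗ[A] A => g x) ∘ (⇑(theta tr hbij hsym ev) ∘
                  fun p : ((M →ₗ[A] A) × M) => (thetaE tr hbij hsym ev hev).symm
                    (p.1.comp (rightAct A B M (op (psi0 tr hbij hsym ev hend d p.2)))))) p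
                = theta tr hbij hsym ev d x * p.1 p.2 := by
              intro p _
              show theta tr hbij hsym ev ((thetaE tr hbij hsym ev hev).symm
                  (p.1.comp (rightAct A B M (op (psi0 tr hbij hsym ev hend d p.2))))) x = _
              rw [thetaE_symm_spec]
              show p.1 (op (psi0 tr hbij hsym ev hend d p.2) • x) = _
              rw [psi0_spec, map_smul, smul_eq_mul]
            rw [List.map_congr_left hpt, list_sum_mul_left l (fun p => p.1 p.2)
              (theta tr hbij hsym ev d x), hl, mul_one]
          have key2 : ∀ p ∈ l,
              (⇑(relB O B M D ev).mkQ ∘ fun p : ((M →ₗ[A] A) × M) =>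
                ((theta tr hbij hsym ev d m) • p.2)
                  ⊗ₜ[O] (thetaE tr hbij hsym ev hev).symm p.1) p
              = ((⇑((relB O B M D ev).mkQ ∘ₗ (TensorProduct.mk O M D m))) ∘
                  fun p : ((M →ₗ[A] A) × M) => (thetaE tr hbij hsym ev hev).symm
                    (p.1.comp (rightAct A B M (op (psi0 tr hbij hsym ev hend d p.2))))) p := by
            intro p _
            show (relB O B M D ev).mkQ (((theta tr hbij hsym ev d m) • p.2)
                ⊗ₜ[O] (thetaE tr hbij hsym ev hev).symm p.1)
              = (relB O B M D ev).mkQ (m ⊗ₜ[O] ((thetaE tr hbij hsym ev hev).symm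
                  (p.1.comp (rightAct A B M (op (psi0 tr hbij hsym ev hend d p.2))))))
            rw [← psi0_spec tr hbij hsym ev hend d p.2 m]
            refine relB_mk ev _ m _ _ ?_
            apply LinearMap.ext
            intro x
            rw [ev_thetaE_symm]
            show tr (p.1 (op (psi0 tr hbij hsym ev hend d p.2) • x))
              = ev ((thetaE tr hbij hsym ev hev).symm p.1)
                  (op (psi0 tr hbij hsym ev hend d p.2) • x)
            rw [ev_thetaE_symm]
          rw [map_list_sum ((relB O B M D ev).mkQ), List.map_map, List.map_congr_left key2,
            ← List.map_map, ← map_list_sum, hsum]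
          rfl
        intro q
        obtain ⟨z, rfl⟩ := Submodule.Quotient.mk_surjective _ q
        show (relB O B M D ev).mkQ
            ((l.map fun p => ((philift tr hbij hsym ev z) • p.2)
              ⊗ₜ[O] (thetaE tr hbij hsym ev hev).symm p.1).sum)
          = (relB O B M D ev).mkQ z
        induction z using TensorProduct.induction_on with
        | zero =>
          rw [map_zero]
          have h0 : (l.map fun p => ((0 : A) • p.2)
              ⊗ₜ[O] (thetaE tr hbij hsym ev hev).symm p.1).sum = 0 := by
            apply List.sum_eq_zero
            intro x hx
            rw [List.mem_map] at hx
            obtain ⟨p, _, rfl⟩ := hx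
            rw [zero_smul, TensorProduct.zero_tmul]
          rw [h0]
        | tmul m d => exact main m d
        | add z z' ih ih' =>
          rw [map_add, Fadd, ih, ih', ← map_add]
      · -- right inverse
        intro a
        show philift tr hbij hsym ev
            ((l.map fun p => (a • p.2) ⊗ₜ[O] (thetaE tr hbij hsym ev hev).symm p.1).sum) = a
        rw [map_list_sum (philift tr hbij hsym ev), List.map_map]
        have hpt : ∀ p ∈ l,
            (⇑(philift tr hbij hsym ev) ∘ fun p : ((M →ₗ[A] A) × M) =>
              (a • p.2) ⊗ₜ[O] (thetaE tr hbij hsym ev hev).symm p.1) p = a * p.1 p.2 := by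
          intro p _
          show theta tr hbij hsym ev ((thetaE tr hbij hsym ev hev).symm p.1) (a • p.2) = _
          rw [thetaE_symm_spec, map_smul, smul_eq_mul]
        rw [List.map_congr_left hpt, list_sum_mul_left l (fun p => p.1 p.2) a, hl, mul_one]
    · intro a m d
      rw [phiQ_mk, phiQ_mk, map_smul, smul_eq_mul]
    · intro a m d d' h
      rw [phiQ_mk, phiQ_mk, theta_smulA tr hbij hsym ev a d d' h]
    · intro m d d' h
      rw [phiQ_mk, phiQ_mk, keyσ d d' h (σM m), hinvol]
  · -- M* ⊗_A M ≅ B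
    refine ⟨psiQ tr hbij hsym ev hend, ?_, ?_, ?_, ?_⟩
    · -- bijectivity of psi
      rw [Function.bijective_iff_has_inverse]
      refine ⟨fun b => (relA O A M D ev).mkQ
          (∑ k, ((thetaE tr hbij hsym ev hev).symm (hk k)) ⊗ₜ[O] (op b • s k)), ?_, ?_⟩
      · -- left inverse
        have Gadd : ∀ b b' : B,
            (relA O A M D ev).mkQ
              (∑ k, ((thetaE tr hbij hsym ev hev).symm (hk k)) ⊗ₜ[O] (op (b + b') • s k))
            = (relA O A M D ev).mkQ
                (∑ k, ((thetaE tr hbij hsym ev hev).symm (hk k)) ⊗ₜ[O] (op b • s k))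
              + (relA O A M D ev).mkQ
                (∑ k, ((thetaE tr hbij hsym ev hev).symm (hk k)) ⊗ₜ[O] (op b' • s k)) := by
          intro b b'
          rw [← map_add, ← Finset.sum_add_distrib]
          apply congrArg
          refine Finset.sum_congr rfl fun k _ => ?_
          rw [op_add, add_smul, TensorProduct.tmul_add]
        have main2 : ∀ (d : D) (m : M),
            (relA O A M D ev).mkQ
              (∑ k, ((thetaE tr hbij hsym ev hev).symm (hk k))
                ⊗ₜ[O] (op (psi0 tr hbij hsym ev hend d m) • s k))
            = (relA O A M D ev).mkQ (d ⊗ₜ[O] m) := by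
          intro d m
          have hsum2 : (∑ k, (thetaE tr hbij hsym ev hev).symm
              (rmulHom (hk k) (theta tr hbij hsym ev d (s k)))) = d := by
            apply theta_injective tr hbij hsym ev hev.injective
            rw [map_sum]
            apply LinearMap.ext
            intro x
            rw [LinearMap.sum_apply]
            have hpt : ∀ k ∈ Finset.univ, theta tr hbij hsym ev
                ((thetaE tr hbij hsym ev hev).symm
                  (rmulHom (hk k) (theta tr hbij hsym ev d (s k)))) x
                = theta tr hbij hsym ev d ((hk k) x • s k) := by
              intro k _
              rw [thetaE_symm_spec]
              show (hk k) x * theta tr hbij hsym ev d (s k) = _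
              rw [map_smul, smul_eq_mul]
            rw [Finset.sum_congr rfl hpt, ← map_sum, hdb]
          have key3 : ∀ k ∈ Finset.univ,
              (relA O A M D ev).mkQ (((thetaE tr hbij hsym ev hev).symm (hk k))
                ⊗ₜ[O] (op (psi0 tr hbij hsym ev hend d m) • s k))
              = ((relA O A M D ev).mkQ ∘ₗ ((TensorProduct.mk O D M).flip m))
                  ((thetaE tr hbij hsym ev hev).symm
                    (rmulHom (hk k) (theta tr hbij hsym ev d (s k)))) := by
            intro k _
            rw [psi0_spec tr hbij hsym ev hend d m (s k)]
            show _ = (relA O A M D ev).mkQ (((thetaE tr hbij hsym ev hev).symm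
                (rmulHom (hk k) (theta tr hbij hsym ev d (s k)))) ⊗ₜ[O] m)
            refine (relA_mk ev (theta tr hbij hsym ev d (s k)) m _ _ ?_).symm
            apply LinearMap.ext
            intro x
            rw [ev_thetaE_symm]
            show tr ((hk k) x * theta tr hbij hsym ev d (s k))
              = ev ((thetaE tr hbij hsym ev hev).symm (hk k))
                  (theta tr hbij hsym ev d (s k) • x)
            rw [ev_thetaE_symm, map_smul, smul_eq_mul, hsym]
          rw [map_sum, Finset.sum_congr rfl key3, ← map_sum, hsum2]
          rfl
        intro q
        obtain ⟨z, rfl⟩ := Submodule.Quotient.mk_surjective _ q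
        show (relA O A M D ev).mkQ
            (∑ k, ((thetaE tr hbij hsym ev hev).symm (hk k))
              ⊗ₜ[O] (op (psilift tr hbij hsym ev hend z) • s k))
          = (relA O A M D ev).mkQ z
        induction z using TensorProduct.induction_on with
        | zero =>
          rw [map_zero]
          have h0 : (∑ k, ((thetaE tr hbij hsym ev hev).symm (hk k))
              ⊗ₜ[O] (op (0 : B) • s k)) = 0 := by
            refine Finset.sum_eq_zero fun k _ => ?_
            rw [op_zero, zero_smul, TensorProduct.tmul_zero]
          rw [h0]
        | tmul d m => exact main2 d m
        | add z z' ih ih' =>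
          rw [map_add, Gadd, ih, ih', ← map_add]
      · -- right inverse
        intro b
        show psilift tr hbij hsym ev hend
            (∑ k, ((thetaE tr hbij hsym ev hev).symm (hk k)) ⊗ₜ[O] (op b • s k)) = b
        rw [map_sum]
        have hone : rightActL (O := O) (A := A) (B := B) (M := M)
            (op (∑ k, psilift tr hbij hsym ev hend
              (((thetaE tr hbij hsym ev hev).symm (hk k)) ⊗ₜ[O] (op b • s k))))
            = rightActL (O := O) (A := A) (B := B) (M := M) (op b) := by
          apply LinearMap.ext
          intro x
          show op (∑ k, psilift tr hbij hsym ev hend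
              (((thetaE tr hbij hsym ev hev).symm (hk k)) ⊗ₜ[O] (op b • s k))) • x
            = op b • x
          have hop : op (∑ k, psilift tr hbij hsym ev hend
              (((thetaE tr hbij hsym ev hev).symm (hk k)) ⊗ₜ[O] (op b • s k)))
              = ∑ k, op (psilift tr hbij hsym ev hend
                (((thetaE tr hbij hsym ev hev).symm (hk k)) ⊗ₜ[O] (op b • s k))) :=
            map_sum (MulOpposite.opAddEquiv : B ≃+ Bᵐᵒᵖ) _ _
          rw [hop, Finset.sum_smul]
          have hpt : ∀ k ∈ Finset.univ,
              op (psilift tr hbij hsym ev hend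
                (((thetaE tr hbij hsym ev hev).symm (hk k)) ⊗ₜ[O] (op b • s k))) • x
              = op b • ((hk k) x • s k) := by
            intro k _
            rw [psilift_tmul, psi0_spec, thetaE_symm_spec]
            exact smul_comm _ (op b) _
          rw [Finset.sum_congr rfl hpt, ← Finset.smul_sum, hdb]
        exact op_injective (hend.injective hone)
    · intro b d d' m h
      rw [psiQ_mk, psiQ_mk]
      refine (psi0_char tr hbij hsym ev hend d' m _ ?_).symm
      intro x
      have h1 : op (b * psi0 tr hbij hsym ev hend d m)
          = op (psi0 tr hbij hsym ev hend d m) * op b := rfl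
      rw [h1, mul_smul, psi0_spec, theta_smulB tr hbij hsym ev b d d' h]
      rfl
    · intro b d m
      rw [psiQ_mk, psiQ_mk]
      refine (psi0_char tr hbij hsym ev hend d (op b • m) _ ?_).symm
      intro x
      have h1 : op (psi0 tr hbij hsym ev hend d m * b)
          = op b * op (psi0 tr hbij hsym ev hend d m) := rfl
      rw [h1, mul_smul, psi0_spec]
      exact (smul_comm (theta tr hbij hsym ev d x) (op b) m).symm
    · intro d d' m h
      rw [psiQ_mk, psiQ_mk]
      refine (psi0_char tr hbij hsym ev hend d' (σM m) _ ?_).symm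
      intro x
      have h1 : op (sB.σ (psi0 tr hbij hsym ev hend d m)) • x
          = σM (op (psi0 tr hbij hsym ev hend d m) • σM x) := by
        rw [hcompatR, hinvol]
      rw [h1, psi0_spec, hcompatL, keyσ d d' h x]
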